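/- Let ε ∈ (0,1) and γ > 0, and let S be any frog-strategy with Succ(S, A_{ε-ws}) > 1 − ε − γ. Then for every b ∈ {0,1}^ω the death probability satisfies DP(S, b) ≤ ε + γ. -/

import Mathlib

/-- A frog-strategy: for each infinite binary sequence `b` (0-indexed: `b i` is bit `b_{i+1}`),
a probability distribution on `ℕ ∪ {∞}`, where `some i` means "cross at minute `i+1`" and
`none` means "wait forever".  The distribution at minute `i+1` may depend only on the
first `i` bits of `b`. -/
structure FrogStrategy where
  prob : (ℕ → Bool) → Option ℕ → ℝ
  nonneg : ∀ b o, 0 ≤ prob b o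
  total : ∀ b, ∑' o : Option ℕ, prob b o = 1
  adapted : ∀ b b' : ℕ → Bool, ∀ i : ℕ,
    (∀ j, j < i → b j = b' j) → prob b (some i) = prob b' (some i)

/-- Success probability: total probability of crossing at a minute with no car. -/
noncomputable def succProb (S : FrogStrategy) (b : ℕ → Bool) : ℝ :=
  ∑' i : ℕ, if b i = false then S.prob b (some i) else 0

/-- Death probability: total probability of crossing at a minute with a car. -/
noncomputable def deathProb (S : FrogStrategy) (b : ℕ → Bool) : ℝ :=
  ∑' i : ℕ, if b i = true then S.prob b (some i) else 0

/-- `cars b t` is `N_t(b) = b_1 + ⋯ + b_t`, the number of cars among the first `t` minutes. -/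
def cars (b : ℕ → Bool) (t : ℕ) : ℕ :=
  ((Finset.range t).filter (fun i => b i = true)).card

/-- `b` is `ε`-weakly sparse if `lim_{s→∞} inf_{t ≥ s} N_t(b)/t ≤ ε`. -/
def epsWeaklySparse (ε : ℝ) (b : ℕ → Bool) : Prop :=
  Filter.liminf (fun t : ℕ => (cars b t : ℝ) / t) Filter.atTop ≤ ε

/-!
Death probability is determined by finite prefixes: by adaptedness, the mass a strategy puts on
car-minutes before time `n` is the same for `b` and for its truncation `b'` that has no cars
after time `n`. Such a `b'` has `N_t(b') / t → 0`, so it is `ε`-weakly sparse, hence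
`DP(S, b') ≤ 1 - Succ(S, b') < ε + γ`. Letting `n → ∞` bounds `DP(S, b)`.
-/

namespace FrogStrategy

variable (S : FrogStrategy) (b : ℕ → Bool)

lemma summable_prob : Summable (S.prob b) := by
  by_contra h
  have h0 := tsum_eq_zero_of_not_summable h
  rw [S.total b] at h0
  exact one_ne_zero h0

lemma summable_prob_some : Summable fun i : ℕ => S.prob b (some i) :=
  (S.summable_prob b).comp_injective (Option.some_injective ℕ)

lemma ite_prob_some_nonneg (p : Prop) [Decidable p] (i : ℕ) :
    0 ≤ if p then S.prob b (some i) else 0 := by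
  split_ifs
  exacts [S.nonneg b _, le_rfl]

lemma summable_ite_prob_some (p : ℕ → Prop) [DecidablePred p] :
    Summable fun i : ℕ => if p i then S.prob b (some i) else 0 :=
  (S.summable_prob_some b).of_nonneg_of_le (fun i => S.ite_prob_some_nonneg b (p i) i)
    fun i => by split_ifs <;> simp [S.nonneg]

lemma succProb_add_deathProb_le_one : succProb S b + deathProb S b ≤ 1 := by
  have hsplit : succProb S b + deathProb S b = ∑' i : ℕ, S.prob b (some i) := by
    rw [succProb, deathProb, ← (S.summable_ite_prob_some b _).tsum_add
      (S.summable_ite_prob_some b _)]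
    congr 1
    funext i
    cases b i <;> simp
  rw [hsplit, ← S.total b]
  exact (S.summable_prob_some b).tsum_le_tsum_of_inj _ (Option.some_injective ℕ)
    (fun o _ => S.nonneg b o) (fun _ => le_rfl) (S.summable_prob b)

lemma sum_range_death_congr {b b' : ℕ → Bool} {n : ℕ} (h : ∀ j < n, b j = b' j) :
    ∑ i ∈ Finset.range n, (if b i = true then S.prob b (some i) else 0) =
      ∑ i ∈ Finset.range n, (if b' i = true then S.prob b' (some i) else 0) := by
  refine Finset.sum_congr rfl fun i hi => ?_
  have hi : i < n := Finset.mem_range.mp hi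
  rw [h i hi, S.adapted b b' i fun j hj => h j (hj.trans hi)]

lemma deathProb_le_of_forall_prefix {C : ℝ}
    (h : ∀ n : ℕ, ∃ b' : ℕ → Bool, (∀ j < n, b j = b' j) ∧ deathProb S b' ≤ C) :
    deathProb S b ≤ C := by
  refine (S.summable_ite_prob_some b _).tsum_le_of_sum_range_le fun n => ?_
  obtain ⟨b', hprefix, hb'⟩ := h n
  calc ∑ i ∈ Finset.range n, (if b i = true then S.prob b (some i) else 0)
      = ∑ i ∈ Finset.range n, (if b' i = true then S.prob b' (some i) else 0) :=
        S.sum_range_death_congr hprefix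
    _ ≤ deathProb S b' :=
        (S.summable_ite_prob_some b' _).sum_le_tsum _ fun i _ => S.ite_prob_some_nonneg b' _ i
    _ ≤ C := hb'

end FrogStrategy

def truncate (b : ℕ → Bool) (n : ℕ) : ℕ → Bool := fun i => decide (i < n) && b i

lemma truncate_of_lt {b : ℕ → Bool} {n i : ℕ} (hi : i < n) : truncate b n i = b i := by
  simp [truncate, hi]

lemma cars_truncate_le (b : ℕ → Bool) (n t : ℕ) : cars (truncate b n) t ≤ n := by
  calc cars (truncate b n) t ≤ (Finset.range n).card := by
        refine Finset.card_le_card fun i hi => ?_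
        simp only [Finset.mem_filter, truncate, Bool.and_eq_true, decide_eq_true_eq] at hi
        exact Finset.mem_range.mpr hi.2.1
    _ = n := Finset.card_range n

lemma epsWeaklySparse_of_cars_le {ε : ℝ} (hε : 0 ≤ ε) {b : ℕ → Bool} {N : ℕ}
    (h : ∀ t, cars b t ≤ N) : epsWeaklySparse ε b := by
  have hdensity : Filter.Tendsto (fun t : ℕ => (cars b t : ℝ) / t) Filter.atTop (nhds 0) := by
    refine squeeze_zero (fun t => by positivity) (fun t => ?_)
      (tendsto_const_div_atTop_nhds_zero_nat (N : ℝ))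
    gcongr
    exact_mod_cast h t
  rw [epsWeaklySparse, hdensity.liminf_eq]
  exact hε

theorem safety_of_success (ε γ : ℝ) (hε0 : 0 < ε)
    (S : FrogStrategy)
    (hS : ∃ c : ℝ, 1 - ε - γ < c ∧ ∀ b : ℕ → Bool, epsWeaklySparse ε b → c ≤ succProb S b) :
    ∀ b : ℕ → Bool, deathProb S b ≤ ε + γ := by
  obtain ⟨c, hc, hsucc⟩ := hS
  intro b
  refine S.deathProb_le_of_forall_prefix b fun n =>
    ⟨truncate b n, fun j hj => (truncate_of_lt hj).symm, ?_⟩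
  have hsparse := epsWeaklySparse_of_cars_le hε0.le (cars_truncate_le b n)
  linarith [S.succProb_add_deathProb_le_one (truncate b n), hsucc _ hsparse]
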